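/- Fix integers d ≥ 1 and n ≥ 1, parameters θ^(k)_{ab} ≥ 0 and μ^(k) ∈ [0,1] for k = 1,…,d, reals m_F, m_I ≥ 0, and let v : {0,…,2^d−1} → ℕ with E_c := n·∏_{k=1}^d (μ^(k))^{c_k}(1−μ^(k))^{1−c_k}, F := {c : E_c ≥ 1}, I := {c : E_c < 1}, and suppose v_c ≤ m_F·E_c for all c ∈ F and v_c ≤ m_I for all c ∈ I. Then each quadrant of the rate matrix Λ_{cc'} = v_c v_{c'} Γ_{cc'} is dominated by the corresponding proposal component: for c ∈ F and c' ∈ F, Λ_{cc'} ≤ Λ^(FF)_{cc'}; for c ∈ F and c' ∈ I, Λ_{cc'} ≤ Λ^(FI)_{cc'}; for c ∈ I and c' ∈ F, Λ_{cc'} ≤ Λ^(IF)_{cc'}; and for c ∈ I and c' ∈ I, Λ_{cc'} ≤ Λ^(II)_{cc'}. -/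

import Mathlib

/-- The `d`-fold Kronecker product `Θ⁽¹⁾ ⊗ Θ⁽²⁾ ⊗ ⋯ ⊗ Θ⁽ᵈ⁾` of `2 × 2` real
matrices (`Θ k a b` is the `(a,b)` entry of the `(k+1)`-st initiator matrix,
`a, b ∈ {0,1}`), viewed as a `2^d × 2^d` matrix indexed by `0, …, 2^d − 1`, so
that its `(c,c')` entry is `∏_k θ⁽ᵏ⁾_{c_k c'_k}` with `c_k` the binary digits of
`c` (most significant first). -/
noncomputable def kronFold : (ℕ → ℕ → ℕ → ℝ) → ℕ → ℕ → ℕ → ℝ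
  | _, 0 => fun _ _ => 1
  | Θ, (d + 1) => fun i j =>
      Θ 0 (i / 2 ^ d) (j / 2 ^ d) *
        kronFold (fun k => Θ (k + 1)) d (i % 2 ^ d) (j % 2 ^ d)

/-- The `(k+1)`-st most significant binary digit of the color `c ∈ {0,…,2^d−1}`,
i.e. `c_k = ⌊c / 2^(d−1−k)⌋ mod 2` for `k ∈ {0,…,d−1}`. -/
def bitOf (d k c : ℕ) : ℕ := c / 2 ^ (d - 1 - k) % 2

/-- `E_c`, the expected number of nodes of color `c` among `n` nodes whose
attribute bits are independent Bernoulli(`μ⁽ᵏ⁾`):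
`E_c = n · ∏_{k=1}^d (μ⁽ᵏ⁾)^{c_k} (1−μ⁽ᵏ⁾)^{1−c_k}`. -/
noncomputable def Ecol (n d : ℕ) (μ : ℕ → ℝ) (c : ℕ) : ℝ :=
  (n : ℝ) * ∏ k ∈ Finset.range d,
    μ k ^ bitOf d k c * (1 - μ k) ^ (1 - bitOf d k c)

/-- Initiator matrices `(n m_F)^{2/d} M^(FF,k)` of the frequent–frequent
proposal component, `M^(FF,k)_{ab} = μ^a(1−μ)^{1−a} μ^b(1−μ)^{1−b} θ_{ab}`. -/
noncomputable def thetaFF (d n : ℕ) (μ : ℕ → ℝ) (θ : ℕ → ℕ → ℕ → ℝ) (mF : ℝ) :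
    ℕ → ℕ → ℕ → ℝ := fun k a b =>
  ((n : ℝ) * mF) ^ ((2 : ℝ) / (d : ℝ)) *
    (μ k ^ a * (1 - μ k) ^ (1 - a) * (μ k ^ b * (1 - μ k) ^ (1 - b)) * θ k a b)

/-- Initiator matrices `(n m_F m_I)^{1/d} M^(FI,k)` of the frequent–infrequent
proposal component, `M^(FI,k)_{ab} = μ^a(1−μ)^{1−a} θ_{ab}`. -/
noncomputable def thetaFI (d n : ℕ) (μ : ℕ → ℝ) (θ : ℕ → ℕ → ℕ → ℝ) (mF mI : ℝ) :
    ℕ → ℕ → ℕ → ℝ := fun k a b =>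
  ((n : ℝ) * mF * mI) ^ ((1 : ℝ) / (d : ℝ)) *
    (μ k ^ a * (1 - μ k) ^ (1 - a) * θ k a b)

/-- Initiator matrices `(n m_I m_F)^{1/d} M^(IF,k)` of the infrequent–frequent
proposal component, `M^(IF,k)_{ab} = μ^b(1−μ)^{1−b} θ_{ab}`. -/
noncomputable def thetaIF (d n : ℕ) (μ : ℕ → ℝ) (θ : ℕ → ℕ → ℕ → ℝ) (mF mI : ℝ) :
    ℕ → ℕ → ℕ → ℝ := fun k a b =>
  ((n : ℝ) * mI * mF) ^ ((1 : ℝ) / (d : ℝ)) *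
    (μ k ^ b * (1 - μ k) ^ (1 - b) * θ k a b)

/-- Initiator matrices `(m_I)^{2/d} Θ⁽ᵏ⁾` of the infrequent–infrequent
proposal component. -/
noncomputable def thetaII (d : ℕ) (θ : ℕ → ℕ → ℕ → ℝ) (mI : ℝ) :
    ℕ → ℕ → ℕ → ℝ := fun k a b =>
  mI ^ ((2 : ℝ) / (d : ℝ)) * θ k a b


/-! Since the rate `v_c v_{c'}` is a product of a row and a column factor, each quadrant
reduces to bounding that product by the proposal's scalar. A Kronecker product of
initiators `s · w_k(a) · w'_k(b) · θ⁽ᵏ⁾_{ab}` factors as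
`s^d · (∏_k w_k(c_k)) · (∏_k w'_k(c'_k)) · Γ_{cc'}`; with `s = x^{j/d}` the scalar becomes
`x^j`, and the Bernoulli weights `w_k` multiply up to `E_c / n`. So e.g.
`Λ^(FF)_{cc'} = (m_F E_c)(m_F E_{c'}) Γ_{cc'}`, and the hypotheses on `v` bound the rate. -/

lemma mod_two_pow_div_two_pow_mod_two {d j : ℕ} (c : ℕ) (hj : j < d) :
    c % 2 ^ d / 2 ^ j % 2 = c / 2 ^ j % 2 := by
  rw [← Nat.mod_mul_right_div_self, ← Nat.mod_mul_right_div_self, Nat.mod_mod_of_dvd,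
    ← pow_succ]
  exact pow_dvd_pow 2 hj

lemma bitOf_succ_zero {d c : ℕ} (hc : c < 2 ^ (d + 1)) : bitOf (d + 1) 0 c = c / 2 ^ d := by
  rw [bitOf, Nat.add_sub_cancel, Nat.sub_zero]
  exact Nat.mod_eq_of_lt (Nat.div_lt_of_lt_mul (by rwa [pow_succ] at hc))

lemma bitOf_succ_succ {d k : ℕ} (c : ℕ) (hk : k < d) :
    bitOf (d + 1) (k + 1) c = bitOf d k (c % 2 ^ d) := by
  rw [bitOf, bitOf, show d + 1 - 1 - (k + 1) = d - 1 - k by omega,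
    mod_two_pow_div_two_pow_mod_two c (by omega)]

lemma prod_range_succ_bitOf {M : Type*} [CommMonoid M] (f : ℕ → ℕ → M) {d c : ℕ}
    (hc : c < 2 ^ (d + 1)) :
    ∏ k ∈ Finset.range (d + 1), f k (bitOf (d + 1) k c) =
      f 0 (c / 2 ^ d) * ∏ k ∈ Finset.range d, f (k + 1) (bitOf d k (c % 2 ^ d)) := by
  rw [Finset.prod_range_succ', bitOf_succ_zero hc, mul_comm]
  congr 1
  exact Finset.prod_congr rfl fun k hk => by rw [bitOf_succ_succ c (Finset.mem_range.mp hk)]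

lemma kronFold_nonneg {Θ : ℕ → ℕ → ℕ → ℝ} (hΘ : ∀ k a b, 0 ≤ Θ k a b) (d c c' : ℕ) :
    0 ≤ kronFold Θ d c c' := by
  induction d generalizing Θ c c' with
  | zero => simp [kronFold]
  | succ d ih => exact mul_nonneg (hΘ _ _ _) (ih (fun k a b => hΘ _ _ _) _ _)

lemma kronFold_const_mul (s : ℝ) (Θ : ℕ → ℕ → ℕ → ℝ) (d c c' : ℕ) :
    kronFold (fun k a b => s * Θ k a b) d c c' = s ^ d * kronFold Θ d c c' := by
  induction d generalizing Θ c c' with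
  | zero => simp [kronFold]
  | succ d ih =>
    simp only [kronFold, ih (fun k => Θ (k + 1))]
    ring

lemma kronFold_weight_mul (f g : ℕ → ℕ → ℝ) (Θ : ℕ → ℕ → ℕ → ℝ) {d c c' : ℕ}
    (hc : c < 2 ^ d) (hc' : c' < 2 ^ d) :
    kronFold (fun k a b => f k a * g k b * Θ k a b) d c c' =
      (∏ k ∈ Finset.range d, f k (bitOf d k c)) *
        (∏ k ∈ Finset.range d, g k (bitOf d k c')) * kronFold Θ d c c' := by
  induction d generalizing f g Θ c c' with
  | zero => simp [kronFold]
  | succ d ih =>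
    have hpos : 0 < 2 ^ d := Nat.two_pow_pos d
    simp only [kronFold]
    rw [ih (fun k => f (k + 1)) (fun k => g (k + 1)) (fun k => Θ (k + 1))
      (Nat.mod_lt _ hpos) (Nat.mod_lt _ hpos), prod_range_succ_bitOf f hc,
      prod_range_succ_bitOf g hc']
    ring

lemma rpow_natCast_div_pow {x : ℝ} (hx : 0 ≤ x) (j : ℕ) {d : ℕ} (hd : d ≠ 0) :
    (x ^ ((j : ℝ) / d)) ^ d = x ^ j := by
  rw [← Real.rpow_natCast _ d, ← Real.rpow_mul hx, div_mul_cancel₀ _ (by exact_mod_cast hd),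
    Real.rpow_natCast]

def bernoulliWeight (μ : ℕ → ℝ) (k a : ℕ) : ℝ := μ k ^ a * (1 - μ k) ^ (1 - a)

lemma Ecol_eq_mul_prod_bernoulliWeight (n d : ℕ) (μ : ℕ → ℝ) (c : ℕ) :
    Ecol n d μ c = n * ∏ k ∈ Finset.range d, bernoulliWeight μ k (bitOf d k c) := rfl

section Quadrants

variable {d n : ℕ} {μ : ℕ → ℝ} {θ : ℕ → ℕ → ℕ → ℝ} {mF mI : ℝ} {c c' : ℕ}

lemma kronFold_thetaFF (hd : d ≠ 0) (hmF : 0 ≤ mF) (hc : c < 2 ^ d) (hc' : c' < 2 ^ d) :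
    kronFold (thetaFF d n μ θ mF) d c c' =
      mF * Ecol n d μ c * (mF * Ecol n d μ c') * kronFold θ d c c' := by
  have hΘ : thetaFF d n μ θ mF = fun k a b => ((n : ℝ) * mF) ^ ((2 : ℕ) / (d : ℝ)) *
      (bernoulliWeight μ k a * bernoulliWeight μ k b * θ k a b) := by
    funext k a b
    rw [thetaFF, bernoulliWeight, bernoulliWeight, Nat.cast_ofNat]
  rw [hΘ, kronFold_const_mul, rpow_natCast_div_pow (by positivity) 2 hd,
    kronFold_weight_mul _ _ _ hc hc', Ecol_eq_mul_prod_bernoulliWeight,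
    Ecol_eq_mul_prod_bernoulliWeight]
  ring

lemma kronFold_thetaFI (hd : d ≠ 0) (hmF : 0 ≤ mF) (hmI : 0 ≤ mI) (hc : c < 2 ^ d)
    (hc' : c' < 2 ^ d) :
    kronFold (thetaFI d n μ θ mF mI) d c c' = mF * Ecol n d μ c * mI * kronFold θ d c c' := by
  have hΘ : thetaFI d n μ θ mF mI = fun k a b => ((n : ℝ) * mF * mI) ^ ((1 : ℕ) / (d : ℝ)) *
      (bernoulliWeight μ k a * (fun _ _ => 1) k b * θ k a b) := by
    funext k a b
    rw [thetaFI, bernoulliWeight, mul_one, Nat.cast_one]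
  rw [hΘ, kronFold_const_mul, rpow_natCast_div_pow (by positivity) 1 hd,
    kronFold_weight_mul _ _ _ hc hc', Ecol_eq_mul_prod_bernoulliWeight, Finset.prod_const_one]
  ring

lemma kronFold_thetaIF (hd : d ≠ 0) (hmF : 0 ≤ mF) (hmI : 0 ≤ mI) (hc : c < 2 ^ d)
    (hc' : c' < 2 ^ d) :
    kronFold (thetaIF d n μ θ mF mI) d c c' = mI * (mF * Ecol n d μ c') * kronFold θ d c c' := by
  have hΘ : thetaIF d n μ θ mF mI = fun k a b => ((n : ℝ) * mI * mF) ^ ((1 : ℕ) / (d : ℝ)) *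
      ((fun _ _ => 1) k a * bernoulliWeight μ k b * θ k a b) := by
    funext k a b
    rw [thetaIF, bernoulliWeight, one_mul, Nat.cast_one]
  rw [hΘ, kronFold_const_mul, rpow_natCast_div_pow (by positivity) 1 hd,
    kronFold_weight_mul _ _ _ hc hc', Ecol_eq_mul_prod_bernoulliWeight, Finset.prod_const_one]
  ring

lemma kronFold_thetaII (hd : d ≠ 0) (hmI : 0 ≤ mI) :
    kronFold (thetaII d θ mI) d c c' = mI * mI * kronFold θ d c c' := by
  have hΘ : thetaII d θ mI = fun k a b => mI ^ ((2 : ℕ) / (d : ℝ)) * θ k a b := by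
    funext k a b
    rw [thetaII, Nat.cast_ofNat]
  rw [hΘ, kronFold_const_mul, rpow_natCast_div_pow hmI 2 hd, sq]

end Quadrants

lemma natCast_mul_natCast_le_mul {x y : ℕ} {a b : ℝ} (hx : (x : ℝ) ≤ a) (hy : (y : ℝ) ≤ b) :
    (x : ℝ) * y ≤ a * b :=
  mul_le_mul hx hy y.cast_nonneg (x.cast_nonneg.trans hx)

theorem proposal_quadrant_domination_general (d n : ℕ) (hd : 1 ≤ d)
    (θ : ℕ → ℕ → ℕ → ℝ) (hθ : ∀ k a b, 0 ≤ θ k a b)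
    (μ : ℕ → ℝ)
    (v : ℕ → ℕ) (mF mI : ℝ) (hmF : 0 ≤ mF) (hmI : 0 ≤ mI)
    (hF : ∀ c < 2 ^ d, 1 ≤ Ecol n d μ c → (v c : ℝ) ≤ mF * Ecol n d μ c)
    (hI : ∀ c < 2 ^ d, Ecol n d μ c < 1 → (v c : ℝ) ≤ mI)
    (c c' : ℕ) (hc : c < 2 ^ d) (hc' : c' < 2 ^ d) :
    (1 ≤ Ecol n d μ c → 1 ≤ Ecol n d μ c' →
        (v c : ℝ) * (v c' : ℝ) * kronFold θ d c c'
          ≤ kronFold (thetaFF d n μ θ mF) d c c') ∧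
    (1 ≤ Ecol n d μ c → Ecol n d μ c' < 1 →
        (v c : ℝ) * (v c' : ℝ) * kronFold θ d c c'
          ≤ kronFold (thetaFI d n μ θ mF mI) d c c') ∧
    (Ecol n d μ c < 1 → 1 ≤ Ecol n d μ c' →
        (v c : ℝ) * (v c' : ℝ) * kronFold θ d c c'
          ≤ kronFold (thetaIF d n μ θ mF mI) d c c') ∧
    (Ecol n d μ c < 1 → Ecol n d μ c' < 1 →
        (v c : ℝ) * (v c' : ℝ) * kronFold θ d c c'
          ≤ kronFold (thetaII d θ mI) d c c') := by
  have hd0 : d ≠ 0 := by omega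
  have hΓ : 0 ≤ kronFold θ d c c' := kronFold_nonneg hθ d c c'
  refine ⟨fun hFc hFc' => ?_, fun hFc hIc' => ?_, fun hIc hFc' => ?_, fun hIc hIc' => ?_⟩
  · rw [kronFold_thetaFF hd0 hmF hc hc']
    exact mul_le_mul_of_nonneg_right
      (natCast_mul_natCast_le_mul (hF c hc hFc) (hF c' hc' hFc')) hΓ
  · rw [kronFold_thetaFI hd0 hmF hmI hc hc']
    exact mul_le_mul_of_nonneg_right
      (natCast_mul_natCast_le_mul (hF c hc hFc) (hI c' hc' hIc')) hΓ
  · rw [kronFold_thetaIF hd0 hmF hmI hc hc']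
    exact mul_le_mul_of_nonneg_right
      (natCast_mul_natCast_le_mul (hI c hc hIc) (hF c' hc' hFc')) hΓ
  · rw [kronFold_thetaII hd0 hmI]
    exact mul_le_mul_of_nonneg_right
      (natCast_mul_natCast_le_mul (hI c hc hIc) (hI c' hc' hIc')) hΓ

/-- **Quadrant-wise domination of the rate matrix by the proposal.**
Suppose `v_c ≤ m_F E_c` for all frequent colors (`E_c ≥ 1`) and `v_c ≤ m_I` for
all infrequent colors (`E_c < 1`).  Then, with `Λ_{cc'} = v_c v_{c'} Γ_{cc'}`
and `Γ = Θ⁽¹⁾ ⊗ ⋯ ⊗ Θ⁽ᵈ⁾`: if `c ∈ F, c' ∈ F` then `Λ_{cc'} ≤ Λ^(FF)_{cc'}`;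
if `c ∈ F, c' ∈ I` then `Λ_{cc'} ≤ Λ^(FI)_{cc'}`; if `c ∈ I, c' ∈ F` then
`Λ_{cc'} ≤ Λ^(IF)_{cc'}`; and if `c ∈ I, c' ∈ I` then `Λ_{cc'} ≤ Λ^(II)_{cc'}`. -/
theorem proposal_quadrant_domination (d n : ℕ) (hd : 1 ≤ d) (hn : 1 ≤ n)
    (θ : ℕ → ℕ → ℕ → ℝ) (hθ : ∀ k a b, 0 ≤ θ k a b)
    (μ : ℕ → ℝ) (hμ : ∀ k, μ k ∈ Set.Icc (0 : ℝ) 1)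
    (v : ℕ → ℕ) (mF mI : ℝ) (hmF : 0 ≤ mF) (hmI : 0 ≤ mI)
    (hF : ∀ c < 2 ^ d, 1 ≤ Ecol n d μ c → (v c : ℝ) ≤ mF * Ecol n d μ c)
    (hI : ∀ c < 2 ^ d, Ecol n d μ c < 1 → (v c : ℝ) ≤ mI)
    (c c' : ℕ) (hc : c < 2 ^ d) (hc' : c' < 2 ^ d) :
    (1 ≤ Ecol n d μ c → 1 ≤ Ecol n d μ c' →
        (v c : ℝ) * (v c' : ℝ) * kronFold θ d c c'
          ≤ kronFold (thetaFF d n μ θ mF) d c c') ∧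
    (1 ≤ Ecol n d μ c → Ecol n d μ c' < 1 →
        (v c : ℝ) * (v c' : ℝ) * kronFold θ d c c'
          ≤ kronFold (thetaFI d n μ θ mF mI) d c c') ∧
    (Ecol n d μ c < 1 → 1 ≤ Ecol n d μ c' →
        (v c : ℝ) * (v c' : ℝ) * kronFold θ d c c'
          ≤ kronFold (thetaIF d n μ θ mF mI) d c c') ∧
    (Ecol n d μ c < 1 → Ecol n d μ c' < 1 →
        (v c : ℝ) * (v c' : ℝ) * kronFold θ d c c'
          ≤ kronFold (thetaII d θ mI) d c c') :=
  proposal_quadrant_domination_general d n hd θ hθ μ v mF mI hmF hmI hF hI c c' hc hc'
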